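/- Let Δ(λ,q) be the discriminant of the discrete Schrödinger operator with (N+1)-periodic potential q, expressed via the G-polynomial expansion. Then Δ is invariant under the cyclic shift and the reversal of the potential: Δ(λ, M_ν q) = Δ(λ, q) and Δ(λ, M_τ q) = Δ(λ, q) for all λ and all q ∈ ℂ^{N+1}. Equivalently, for each j with N−j odd, G_j^{N+1}(λ, M_ω q) = G_j^{N+1}(λ, q) for ω ∈ {ν, τ}, because the index set D_j^{N+1} is invariant under the induced permutations of {1,...,N+1}. -/
import Mathlib


/-- Membership predicate of `D_j^n`. -/
def isD (j n : ℕ) (α : Fin j → ℕ) : Prop :=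
  StrictMono α ∧ (∀ s, 1 ≤ α s ∧ α s ≤ n) ∧
    ∀ (s : Fin j) (h : (s : ℕ) + 1 < j), Odd ((α ⟨(s : ℕ) + 1, h⟩ : ℤ) - (α s : ℤ))

open Classical in
/-- `G_j^n(λ,q) = Σ_{α ∈ D_j^n} Π_s (λ - q (α s))`, with `G_0^n = 2`. -/
noncomputable def Gpoly (j n : ℕ) (lam : ℂ) (q : ℕ → ℂ) : ℂ :=
  if j = 0 then 2
  else ∑ β : Fin j → Fin (n + 2),
    if isD j n (fun s => (β s : ℕ)) then ∏ s, (lam - q (β s)) else 0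

/-- Fundamental solution `φ`: `φ_0 = 0`, `φ_1 = 1`,
`φ_{n+1} = (λ - q_n) φ_n - φ_{n-1}`. -/
noncomputable def phi (lam : ℂ) (q : ℕ → ℂ) : ℕ → ℂ
  | 0 => 0
  | 1 => 1
  | n + 2 => (lam - q (n + 1)) * phi lam q (n + 1) - phi lam q n

/-- Fundamental solution `θ`: `θ_0 = 1`, `θ_1 = 0`,
`θ_{n+1} = (λ - q_n) θ_n - θ_{n-1}`. -/
noncomputable def theta (lam : ℂ) (q : ℕ → ℂ) : ℕ → ℂ
  | 0 => 1
  | 1 => 0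
  | n + 2 => (lam - q (n + 1)) * theta lam q (n + 1) - theta lam q n

/-- The discriminant `Δ(λ,q) = φ_{N+2}(λ,q) + θ_{N+1}(λ,q)` of the discrete
Schrödinger operator with `(N+1)`-periodic potential `q` (entries `q 1, ..., q (N+1)`). -/
noncomputable def Delta (N : ℕ) (lam : ℂ) (q : ℕ → ℂ) : ℂ :=
  phi lam q (N + 2) + theta lam q (N + 1)

section TransferMatrixAux
open Matrix

noncomputable def Tm (lam x : ℂ) : Matrix (Fin 2) (Fin 2) ℂ := !![lam - x, -1; 1, 0]

noncomputable def Pm (lam : ℂ) (q : ℕ → ℂ) : ℕ → Matrix (Fin 2) (Fin 2) ℂ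
  | 0 => 1
  | n + 1 => Tm lam (q (n + 1)) * Pm lam q n

noncomputable def Rm (lam : ℂ) (q : ℕ → ℂ) : ℕ → Matrix (Fin 2) (Fin 2) ℂ
  | 0 => 1
  | n + 1 => Rm lam q n * Tm lam (q (n + 1))

lemma Pm_eq (lam : ℂ) (q : ℕ → ℂ) (n : ℕ) :
    Pm lam q n = !![phi lam q (n+1), theta lam q (n+1); phi lam q n, theta lam q n] := by
  induction n with
  | zero => simp [Pm, phi, theta, Matrix.one_fin_two]
  | succ n ih =>
      rw [Pm, ih, Tm, Matrix.mul_fin_two]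
      have h1 : phi lam q (n+2) = (lam - q (n+1)) * phi lam q (n+1) - phi lam q n := rfl
      have h2 : theta lam q (n+2) = (lam - q (n+1)) * theta lam q (n+1) - theta lam q n := rfl
      rw [h1, h2]; congr 1 <;> ring

lemma Delta_eq_trace (N : ℕ) (lam : ℂ) (q : ℕ → ℂ) :
    Delta N lam q = (Pm lam q (N+1)).trace := by
  rw [Pm_eq, Matrix.trace_fin_two_of, Delta]

lemma Pm_congr (lam : ℂ) {f g : ℕ → ℂ} (n : ℕ) (h : ∀ k, 1 ≤ k → k ≤ n → f k = g k) :
    Pm lam f n = Pm lam g n := by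
  induction n with
  | zero => rfl
  | succ n ih =>
      rw [Pm, Pm, h (n+1) (by omega) le_rfl, ih (fun k h1 h2 => h k h1 (by omega))]

lemma Pm_succ_eq (lam : ℂ) (q : ℕ → ℂ) (n : ℕ) :
    Pm lam q (n+1) = Pm lam (fun k => q (k+1)) n * Tm lam (q 1) := by
  induction n with
  | zero => show Tm lam (q 1) * 1 = 1 * Tm lam (q 1); rw [one_mul, mul_one]
  | succ n ih =>
      show Tm lam (q (n+2)) * Pm lam q (n+1) = _
      rw [ih]
      show _ = (Tm lam (q (n+1+1)) * Pm lam (fun k => q (k+1)) n) * Tm lam (q 1)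
      rw [mul_assoc]

lemma Rm_succ_shift (lam : ℂ) (g : ℕ → ℂ) (n : ℕ) :
    Rm lam g (n+1) = Tm lam (g 1) * Rm lam (fun k => g (k+1)) n := by
  induction n with
  | zero => show 1 * Tm lam (g 1) = Tm lam (g 1) * 1; rw [one_mul, mul_one]
  | succ n ih =>
      show Rm lam g (n+1) * Tm lam (g (n+2)) = _
      rw [ih]
      show _ = Tm lam (g 1) * (Rm lam (fun k => g (k+1)) n * Tm lam (g (n+1+1)))
      rw [mul_assoc]

lemma Pm_rev (lam : ℂ) (n : ℕ) : ∀ g : ℕ → ℂ,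
    Pm lam (fun k => g (n+1-k)) n = Rm lam g n := by
  induction n with
  | zero => intro g; rfl
  | succ n ih =>
      intro g
      show Tm lam (g (n+2-(n+1))) * Pm lam (fun k => g (n+2-k)) n = _
      have e1 : n+2-(n+1) = 1 := by omega
      rw [e1]
      have e2 : Pm lam (fun k => g (n+2-k)) n = Pm lam (fun k => (fun m => g (m+1)) (n+1-k)) n := by
        apply Pm_congr
        intro k h1 h2
        have : n+2-k = (n+1-k)+1 := by omega
        rw [this]
      rw [e2, ih (fun m => g (m+1)), ← Rm_succ_shift]

noncomputable def Sm : Matrix (Fin 2) (Fin 2) ℂ := !![1, 0; 0, -1]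

lemma Sm_mul_Sm : Sm * Sm = 1 := by
  rw [Sm, Matrix.mul_fin_two, Matrix.one_fin_two]; norm_num

lemma Tm_transpose (lam x : ℂ) : (Tm lam x)ᵀ = Sm * Tm lam x * Sm := by
  rw [Tm, Sm, Matrix.mul_fin_two, Matrix.mul_fin_two]
  ext i j
  fin_cases i <;> fin_cases j <;> simp [Matrix.transpose] <;> ring

lemma Pm_transpose (lam : ℂ) (g : ℕ → ℂ) (n : ℕ) :
    (Pm lam g n)ᵀ = Sm * Rm lam g n * Sm := by
  induction n with
  | zero =>
      show (1 : Matrix (Fin 2) (Fin 2) ℂ)ᵀ = Sm * 1 * Sm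
      rw [Matrix.transpose_one, mul_one, Sm_mul_Sm]
  | succ n ih =>
      show (Tm lam (g (n+1)) * Pm lam g n)ᵀ = Sm * (Rm lam g n * Tm lam (g (n+1))) * Sm
      rw [Matrix.transpose_mul, ih, Tm_transpose]
      have h := Sm_mul_Sm
      calc Sm * Rm lam g n * Sm * (Sm * Tm lam (g (n+1)) * Sm)
          = Sm * Rm lam g n * (Sm * Sm) * Tm lam (g (n+1)) * Sm := by
            simp only [mul_assoc]
        _ = Sm * (Rm lam g n * Tm lam (g (n+1))) * Sm := by
            rw [h, mul_one]; simp only [mul_assoc]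

lemma trace_Rm (lam : ℂ) (g : ℕ → ℂ) (n : ℕ) :
    (Rm lam g n).trace = (Pm lam g n).trace := by
  have h : Rm lam g n = Sm * (Pm lam g n)ᵀ * Sm := by
    have h2 : Sm * (Sm * Rm lam g n * Sm) * Sm = Rm lam g n := by
      simp only [← mul_assoc]
      rw [Sm_mul_Sm, one_mul, mul_assoc, Sm_mul_Sm, mul_one]
    rw [Pm_transpose, h2]
  rw [h, Matrix.trace_mul_comm, ← mul_assoc, Sm_mul_Sm, one_mul, Matrix.trace_transpose]

lemma Delta_nu (N : ℕ) (lam : ℂ) (q qnu : ℕ → ℂ)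
    (hqnu : ∀ n : ℕ, 1 ≤ n → n ≤ N + 1 →
      qnu n = if n = N + 1 then q 1 else q (n + 1)) :
    Delta N lam qnu = Delta N lam q := by
  rw [Delta_eq_trace, Delta_eq_trace]
  have h1 : Pm lam qnu (N+1) = Tm lam (q 1) * Pm lam (fun k => q (k+1)) N := by
    show Tm lam (qnu (N+1)) * Pm lam qnu N = _
    rw [hqnu (N+1) (by omega) le_rfl, if_pos rfl]
    congr 1
    apply Pm_congr
    intro k h1 h2
    rw [hqnu k h1 (by omega), if_neg (by omega)]
  rw [h1, Pm_succ_eq, Matrix.trace_mul_comm]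

lemma Delta_tau (N : ℕ) (lam : ℂ) (q qtau : ℕ → ℂ)
    (hqtau : ∀ n : ℕ, 1 ≤ n → n ≤ N + 1 → qtau n = q (N + 2 - n)) :
    Delta N lam qtau = Delta N lam q := by
  rw [Delta_eq_trace, Delta_eq_trace]
  have h1 : Pm lam qtau (N+1) = Pm lam (fun k => q (N+2-k)) (N+1) :=
    Pm_congr lam (N+1) (fun k hk1 hk2 => hqtau k hk1 hk2)
  rw [h1, Pm_rev, trace_Rm]

end TransferMatrixAux

section CombinatorialAux

lemma isD_parity {j n : ℕ} {α : Fin j → ℕ} (h : isD j n α) (h0 : 0 < j) :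
    ∀ (s : ℕ) (hs : s < j), ((α ⟨s, hs⟩ : ℤ) - (α ⟨0, h0⟩ : ℤ)) % 2 = (s : ℤ) % 2 := by
  intro s
  induction s with
  | zero => intro hs; simp
  | succ k ih =>
      intro hs
      have hk : k < j := by omega
      have hg : Odd ((α ⟨k + 1, hs⟩ : ℤ) - (α ⟨k, hk⟩ : ℤ)) := h.2.2 ⟨k, hk⟩ hs
      rw [Int.odd_iff] at hg
      have h2 := ih hk
      omega

lemma isD_mono_le {j n : ℕ} {α : Fin j → ℕ} (h : isD j n α) {s t : Fin j}
    (hst : (s : ℕ) ≤ (t : ℕ)) : α s ≤ α t := by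
  rcases eq_or_lt_of_le hst with he | hl
  · have : s = t := Fin.ext he
    rw [this]
  · exact le_of_lt (h.1 hl)

/-! ### The reversal bijection -/

def tauMap (N j : ℕ) (β : Fin j → Fin (N + 1 + 2)) : Fin j → Fin (N + 1 + 2) :=
  fun s => ⟨N + 2 - (β (Fin.rev s) : ℕ), by omega⟩

lemma tauMap_involutive (N j : ℕ) : Function.Involutive (tauMap N j) := by
  intro β
  funext s
  apply Fin.ext
  show N + 2 - (N + 2 - (β (Fin.rev (Fin.rev s)) : ℕ)) = (β s : ℕ)
  rw [Fin.rev_rev]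
  have := (β s).isLt
  omega

lemma isD_tauMap {N j : ℕ} {β : Fin j → Fin (N + 1 + 2)}
    (h : isD j (N + 1) fun s => (β s : ℕ)) :
    isD j (N + 1) fun s => ((tauMap N j β s : ℕ)) := by
  obtain ⟨hmono, hbd, hgap⟩ := h
  refine ⟨?_, ?_, ?_⟩
  · intro s t hst
    have h1 : Fin.rev t < Fin.rev s := by rw [Fin.rev_lt_rev]; exact hst
    have h2 : (β (Fin.rev t) : ℕ) < (β (Fin.rev s) : ℕ) := hmono h1
    have h3 : (β (Fin.rev s) : ℕ) ≤ N + 1 := (hbd (Fin.rev s)).2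
    show N + 2 - (β (Fin.rev s) : ℕ) < N + 2 - (β (Fin.rev t) : ℕ)
    omega
  · intro s
    have h1 : 1 ≤ (β (Fin.rev s) : ℕ) := (hbd (Fin.rev s)).1
    have h2 : (β (Fin.rev s) : ℕ) ≤ N + 1 := (hbd (Fin.rev s)).2
    show 1 ≤ N + 2 - (β (Fin.rev s) : ℕ) ∧ N + 2 - (β (Fin.rev s) : ℕ) ≤ N + 1
    omega
  · intro s hs
    have hsj := s.isLt
    have hr0 : j - (s + 2) < j := by omega
    have hrj : j - (s + 2) + 1 < j := by omega
    have e1 : Fin.rev (⟨(s : ℕ) + 1, hs⟩ : Fin j) = ⟨j - (s + 2), hr0⟩ := by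
      apply Fin.ext; simp only [Fin.val_rev, Fin.val_mk]; try omega
    have e2 : Fin.rev s = ⟨j - (s + 2) + 1, hrj⟩ := by
      apply Fin.ext; simp only [Fin.val_rev, Fin.val_mk]; try omega
    have hg : Odd ((β ⟨j - (s + 2) + 1, hrj⟩ : ℤ) - (β ⟨j - (s + 2), hr0⟩ : ℤ)) :=
      hgap ⟨j - (s + 2), hr0⟩ hrj
    rw [Int.odd_iff] at hg
    show Odd (((N + 2 - (β (Fin.rev ⟨(s : ℕ) + 1, hs⟩) : ℕ) : ℕ) : ℤ)
      - ((N + 2 - (β (Fin.rev s) : ℕ) : ℕ) : ℤ))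
    rw [e1, e2, Int.odd_iff]
    have hb1 := (β ⟨j - (s + 2) + 1, hrj⟩).isLt
    have hb2 := (β ⟨j - (s + 2), hr0⟩).isLt
    omega

lemma G_tau (N : ℕ) (lam : ℂ) (q qtau : ℕ → ℂ)
    (hqtau : ∀ n : ℕ, 1 ≤ n → n ≤ N + 1 → qtau n = q (N + 2 - n)) (j : ℕ) :
    Gpoly j (N + 1) lam qtau = Gpoly j (N + 1) lam q := by
  classical
  rcases Nat.eq_zero_or_pos j with rfl | hj
  · simp [Gpoly]
  rw [Gpoly, Gpoly, if_neg (by omega), if_neg (by omega)]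
  refine Fintype.sum_bijective (tauMap N j) (tauMap_involutive N j).bijective _ _ ?_
  intro β
  by_cases hD : isD j (N + 1) fun s => (β s : ℕ)
  · rw [if_pos hD, if_pos (isD_tauMap hD)]
    calc ∏ s, (lam - qtau (β s : ℕ))
        = ∏ s, (lam - q (N + 2 - (β s : ℕ))) := by
          refine Finset.prod_congr rfl fun s _ => ?_
          rw [hqtau (β s : ℕ) (hD.2.1 s).1 (hD.2.1 s).2]
      _ = ∏ s, (lam - q (N + 2 - (β (Fin.rev s) : ℕ))) := by
          have := Equiv.prod_comp (Fin.revPerm (n := j))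
            (fun s => lam - q (N + 2 - (β s : ℕ)))
          simp only [Fin.revPerm_apply] at this
          exact this.symm
      _ = ∏ s, (lam - q ((tauMap N j β s : ℕ))) := rfl
  · rw [if_neg hD, if_neg ?_]
    intro h'
    apply hD
    have h2 := isD_tauMap h'
    rwa [tauMap_involutive N j β] at h2

/-! ### The shift bijection -/

def nuMap (N m : ℕ) (α : Fin (m + 1) → ℕ) : Fin (m + 1) → ℕ :=
  if α ⟨m, Nat.lt_succ_self m⟩ = N + 1 then
    fun s => if (s : ℕ) = 0 then 1
      else α ⟨(s : ℕ) - 1, lt_of_le_of_lt (Nat.sub_le _ _) s.isLt⟩ + 1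
  else fun s => α s + 1

def nuInv (N m : ℕ) (γ : Fin (m + 1) → ℕ) : Fin (m + 1) → ℕ :=
  if γ ⟨0, Nat.succ_pos m⟩ = 1 then
    fun s => if h : (s : ℕ) = m then N + 1
      else γ ⟨(s : ℕ) + 1, by have := s.isLt; omega⟩ - 1
  else fun s => γ s - 1

lemma nuMap_apply_zero {N m : ℕ} {α : Fin (m + 1) → ℕ}
    (hlast : α ⟨m, Nat.lt_succ_self m⟩ = N + 1) (s : Fin (m + 1)) (hs0 : (s : ℕ) = 0) :
    nuMap N m α s = 1 := by
  rw [nuMap, if_pos hlast]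
  simp [hs0]

lemma nuMap_apply_pos {N m : ℕ} {α : Fin (m + 1) → ℕ}
    (hlast : α ⟨m, Nat.lt_succ_self m⟩ = N + 1) (s : Fin (m + 1)) (hs0 : (s : ℕ) ≠ 0)
    (k : Fin (m + 1)) (hk : (k : ℕ) = (s : ℕ) - 1) :
    nuMap N m α s = α k + 1 := by
  rw [nuMap, if_pos hlast]
  simp only [if_neg hs0]
  exact congrArg (fun x => α x + 1) (Fin.ext hk).symm

lemma nuMap_apply_nolast {N m : ℕ} {α : Fin (m + 1) → ℕ}
    (hlast : ¬ α ⟨m, Nat.lt_succ_self m⟩ = N + 1) (s : Fin (m + 1)) :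
    nuMap N m α s = α s + 1 := by
  rw [nuMap, if_neg hlast]

lemma nuInv_apply_last {N m : ℕ} {γ : Fin (m + 1) → ℕ}
    (h1 : γ ⟨0, Nat.succ_pos m⟩ = 1) (s : Fin (m + 1)) (hsm : (s : ℕ) = m) :
    nuInv N m γ s = N + 1 := by
  rw [nuInv, if_pos h1]
  simp [hsm]

lemma nuInv_apply_mid {N m : ℕ} {γ : Fin (m + 1) → ℕ}
    (h1 : γ ⟨0, Nat.succ_pos m⟩ = 1) (s : Fin (m + 1)) (hsm : (s : ℕ) ≠ m)
    (k : Fin (m + 1)) (hk : (k : ℕ) = (s : ℕ) + 1) :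
    nuInv N m γ s = γ k - 1 := by
  rw [nuInv, if_pos h1]
  simp only [dif_neg hsm]
  exact congrArg (fun x => γ x - 1) (Fin.ext hk).symm

lemma nuInv_apply_no1 {N m : ℕ} {γ : Fin (m + 1) → ℕ}
    (h1 : ¬ γ ⟨0, Nat.succ_pos m⟩ = 1) (s : Fin (m + 1)) :
    nuInv N m γ s = γ s - 1 := by
  rw [nuInv, if_neg h1]

lemma isD_nuMap {N m : ℕ} (hodd : Odd ((N : ℤ) - ((m + 1 : ℕ) : ℤ))) {α : Fin (m + 1) → ℕ}
    (h : isD (m + 1) (N + 1) α) : isD (m + 1) (N + 1) (nuMap N m α) := by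
  obtain ⟨hmono, hbd, hgap⟩ := h
  have hub : ∀ s : Fin (m + 1), (s : ℕ) < m → α s ≤ N := by
    intro s hsm
    have h1 : α s < α ⟨m, Nat.lt_succ_self m⟩ := hmono (by rw [Fin.lt_def]; simpa using hsm)
    have h2 := (hbd ⟨m, Nat.lt_succ_self m⟩).2
    omega
  by_cases hlast : α ⟨m, Nat.lt_succ_self m⟩ = N + 1
  · refine ⟨?_, ?_, ?_⟩
    · intro s t hst
      have hst' : (s : ℕ) < (t : ℕ) := hst
      have htl := t.isLt
      have hp : (t : ℕ) - 1 < m + 1 := by omega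
      rw [nuMap_apply_pos hlast t (by omega) ⟨(t : ℕ) - 1, hp⟩ rfl]
      by_cases hs0 : (s : ℕ) = 0
      · rw [nuMap_apply_zero hlast s hs0]
        have := (hbd ⟨(t : ℕ) - 1, hp⟩).1
        omega
      · have hq : (s : ℕ) - 1 < m + 1 := by omega
        rw [nuMap_apply_pos hlast s hs0 ⟨(s : ℕ) - 1, hq⟩ rfl]
        have : α ⟨(s : ℕ) - 1, hq⟩ < α ⟨(t : ℕ) - 1, hp⟩ :=
          hmono (by rw [Fin.mk_lt_mk]; omega)
        omega
    · intro s
      have hsl := s.isLt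
      by_cases hs0 : (s : ℕ) = 0
      · rw [nuMap_apply_zero hlast s hs0]; omega
      · have hq : (s : ℕ) - 1 < m + 1 := by omega
        rw [nuMap_apply_pos hlast s hs0 ⟨(s : ℕ) - 1, hq⟩ rfl]
        have h1 := (hbd ⟨(s : ℕ) - 1, hq⟩).1
        have h2 : α ⟨(s : ℕ) - 1, hq⟩ ≤ N := hub _ (by simp; omega)
        omega
    · intro s hs
      have hsl := s.isLt
      by_cases hs0 : (s : ℕ) = 0
      · rw [nuMap_apply_pos hlast ⟨(s : ℕ) + 1, hs⟩ (by simp) ⟨0, Nat.succ_pos m⟩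
            (by simp [hs0]), nuMap_apply_zero hlast s hs0]
        have hpar := isD_parity ⟨hmono, hbd, hgap⟩ (Nat.succ_pos m) m (Nat.lt_succ_self m)
        obtain ⟨kk, hkk⟩ := hodd
        rw [Int.odd_iff]
        omega
      · have hp : (s : ℕ) - 1 < m + 1 := by omega
        have hq : (s : ℕ) - 1 + 1 < m + 1 := by omega
        rw [nuMap_apply_pos hlast ⟨(s : ℕ) + 1, hs⟩ (by simp) s rfl,
            nuMap_apply_pos hlast s hs0 ⟨(s : ℕ) - 1, hp⟩ rfl]
        have hg2 : Odd ((α ⟨(s : ℕ) - 1 + 1, hq⟩ : ℤ) - (α ⟨(s : ℕ) - 1, hp⟩ : ℤ)) :=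
          hgap ⟨(s : ℕ) - 1, hp⟩ hq
        have e3 : (⟨(s : ℕ) - 1 + 1, hq⟩ : Fin (m + 1)) = s := Fin.ext (by simp; omega)
        rw [e3] at hg2
        rw [Int.odd_iff] at hg2 ⊢
        omega
  · refine ⟨?_, ?_, ?_⟩
    · intro s t hst
      rw [nuMap_apply_nolast hlast s, nuMap_apply_nolast hlast t]
      have := hmono hst
      omega
    · intro s
      rw [nuMap_apply_nolast hlast s]
      have h1 := (hbd s).1
      have h2 : α s ≤ α ⟨m, Nat.lt_succ_self m⟩ :=
        isD_mono_le ⟨hmono, hbd, hgap⟩ (by simpa using Nat.lt_succ_iff.mp s.isLt)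
      have h3 := (hbd ⟨m, Nat.lt_succ_self m⟩).2
      omega
    · intro s hs
      rw [nuMap_apply_nolast hlast ⟨(s : ℕ) + 1, hs⟩, nuMap_apply_nolast hlast s]
      have hg := hgap s hs
      rw [Int.odd_iff] at hg ⊢
      omega

lemma isD_nuInv {N m : ℕ} (hodd : Odd ((N : ℤ) - ((m + 1 : ℕ) : ℤ))) {γ : Fin (m + 1) → ℕ}
    (h : isD (m + 1) (N + 1) γ) : isD (m + 1) (N + 1) (nuInv N m γ) := by
  obtain ⟨hmono, hbd, hgap⟩ := h
  have hlb : ∀ s : Fin (m + 1), 0 < (s : ℕ) → 2 ≤ γ s := by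
    intro s hs
    have h1 : γ ⟨0, Nat.succ_pos m⟩ < γ s := hmono (by rw [Fin.lt_def]; simpa using hs)
    have h2 := (hbd ⟨0, Nat.succ_pos m⟩).1
    omega
  by_cases h1 : γ ⟨0, Nat.succ_pos m⟩ = 1
  · refine ⟨?_, ?_, ?_⟩
    · intro s t hst
      have hst' : (s : ℕ) < (t : ℕ) := hst
      have htl := t.isLt
      have hsm : (s : ℕ) ≠ m := by omega
      have hp : (s : ℕ) + 1 < m + 1 := by omega
      rw [nuInv_apply_mid h1 s hsm ⟨(s : ℕ) + 1, hp⟩ rfl]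
      by_cases htm : (t : ℕ) = m
      · rw [nuInv_apply_last h1 t htm]
        have := (hbd ⟨(s : ℕ) + 1, hp⟩).2
        omega
      · have hq : (t : ℕ) + 1 < m + 1 := by omega
        rw [nuInv_apply_mid h1 t htm ⟨(t : ℕ) + 1, hq⟩ rfl]
        have h3 : γ ⟨(s : ℕ) + 1, hp⟩ < γ ⟨(t : ℕ) + 1, hq⟩ :=
          hmono (by rw [Fin.mk_lt_mk]; omega)
        have h4 := hlb ⟨(s : ℕ) + 1, hp⟩ (by simp)
        omega
    · intro s
      have hsl := s.isLt
      by_cases hsm : (s : ℕ) = m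
      · rw [nuInv_apply_last h1 s hsm]; omega
      · have hp : (s : ℕ) + 1 < m + 1 := by omega
        rw [nuInv_apply_mid h1 s hsm ⟨(s : ℕ) + 1, hp⟩ rfl]
        have h2 := (hbd ⟨(s : ℕ) + 1, hp⟩).2
        have h4 := hlb ⟨(s : ℕ) + 1, hp⟩ (by simp)
        omega
    · intro s hs
      have hsl := s.isLt
      by_cases hsm : (s : ℕ) + 1 = m
      · rw [nuInv_apply_last h1 ⟨(s : ℕ) + 1, hs⟩ hsm]
        have hp : ¬ (s : ℕ) = m := by omega
        rw [nuInv_apply_mid h1 s hp ⟨(s : ℕ) + 1, hs⟩ rfl]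
        have hpar := isD_parity ⟨hmono, hbd, hgap⟩ (Nat.succ_pos m) ((s : ℕ) + 1) hs
        obtain ⟨kk, hkk⟩ := hodd
        have hb := (hbd ⟨(s : ℕ) + 1, hs⟩).1
        rw [Int.odd_iff]
        omega
      · have hq2 : (s : ℕ) + 1 + 1 < m + 1 := by omega
        rw [nuInv_apply_mid h1 ⟨(s : ℕ) + 1, hs⟩ hsm ⟨(s : ℕ) + 1 + 1, hq2⟩ rfl,
            nuInv_apply_mid h1 s (by omega) ⟨(s : ℕ) + 1, hs⟩ rfl]
        have hg2 : Odd ((γ ⟨(s : ℕ) + 1 + 1, hq2⟩ : ℤ) - (γ ⟨(s : ℕ) + 1, hs⟩ : ℤ)) :=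
          hgap ⟨(s : ℕ) + 1, hs⟩ hq2
        have hb1 := (hbd ⟨(s : ℕ) + 1, hs⟩).1
        have hb2 := (hbd ⟨(s : ℕ) + 1 + 1, hq2⟩).1
        rw [Int.odd_iff] at hg2 ⊢
        omega
  · have h0 := (hbd ⟨0, Nat.succ_pos m⟩).1
    have hall : ∀ s, 2 ≤ γ s := by
      intro s
      rcases Nat.eq_zero_or_pos (s : ℕ) with hz | hz
      · have : s = ⟨0, Nat.succ_pos m⟩ := Fin.ext hz
        rw [this]; omega
      · exact hlb s hz
    refine ⟨?_, ?_, ?_⟩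
    · intro s t hst
      rw [nuInv_apply_no1 h1 s, nuInv_apply_no1 h1 t]
      have := hmono hst
      have := hall s
      omega
    · intro s
      rw [nuInv_apply_no1 h1 s]
      have := hall s
      have := (hbd s).2
      omega
    · intro s hs
      rw [nuInv_apply_no1 h1 ⟨(s : ℕ) + 1, hs⟩, nuInv_apply_no1 h1 s]
      have hg := hgap s hs
      have := hall s
      have := hall ⟨(s : ℕ) + 1, hs⟩
      rw [Int.odd_iff] at hg ⊢
      omega

lemma nuInv_nuMap {N m : ℕ} {α : Fin (m + 1) → ℕ} (h : isD (m + 1) (N + 1) α) :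
    nuInv N m (nuMap N m α) = α := by
  funext s
  have hsl := s.isLt
  by_cases hlast : α ⟨m, Nat.lt_succ_self m⟩ = N + 1
  · have h0 : nuMap N m α ⟨0, Nat.succ_pos m⟩ = 1 := nuMap_apply_zero hlast _ rfl
    by_cases hsm : (s : ℕ) = m
    · rw [nuInv_apply_last h0 s hsm]
      have : s = ⟨m, Nat.lt_succ_self m⟩ := Fin.ext hsm
      rw [this, hlast]
    · have hq : (s : ℕ) + 1 < m + 1 := by omega
      rw [nuInv_apply_mid h0 s hsm ⟨(s : ℕ) + 1, hq⟩ rfl,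
          nuMap_apply_pos hlast ⟨(s : ℕ) + 1, hq⟩ (by simp) s rfl]
      omega
  · have h0 : ¬ nuMap N m α ⟨0, Nat.succ_pos m⟩ = 1 := by
      rw [nuMap_apply_nolast hlast]
      have := (h.2.1 ⟨0, Nat.succ_pos m⟩).1
      omega
    rw [nuInv_apply_no1 h0 s, nuMap_apply_nolast hlast s]
    omega

lemma nuMap_nuInv {N m : ℕ} {γ : Fin (m + 1) → ℕ} (h : isD (m + 1) (N + 1) γ) :
    nuMap N m (nuInv N m γ) = γ := by
  funext s
  have hsl := s.isLt
  by_cases h1 : γ ⟨0, Nat.succ_pos m⟩ = 1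
  · have hl : nuInv N m γ ⟨m, Nat.lt_succ_self m⟩ = N + 1 := nuInv_apply_last h1 _ rfl
    by_cases hs0 : (s : ℕ) = 0
    · rw [nuMap_apply_zero hl s hs0]
      have : s = ⟨0, Nat.succ_pos m⟩ := Fin.ext hs0
      rw [this, h1]
    · have hp : (s : ℕ) - 1 < m + 1 := by omega
      have hq : (s : ℕ) - 1 + 1 < m + 1 := by omega
      rw [nuMap_apply_pos hl s hs0 ⟨(s : ℕ) - 1, hp⟩ rfl,
          nuInv_apply_mid h1 ⟨(s : ℕ) - 1, hp⟩ (by simp; omega) ⟨(s : ℕ) - 1 + 1, hq⟩ rfl]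
      have e3 : (⟨(s : ℕ) - 1 + 1, hq⟩ : Fin (m + 1)) = s := Fin.ext (by simp; omega)
      rw [e3]
      have := (h.2.1 s).1
      omega
  · have h1' : ¬ nuInv N m γ ⟨m, Nat.lt_succ_self m⟩ = N + 1 := by
      rw [nuInv_apply_no1 h1]
      have := (h.2.1 ⟨m, Nat.lt_succ_self m⟩).2
      omega
    rw [nuMap_apply_nolast h1' s, nuInv_apply_no1 h1 s]
    have := (h.2.1 s).1
    omega

def toFinF (N m : ℕ) (α : Fin (m + 1) → ℕ) : Fin (m + 1) → Fin (N + 1 + 2) :=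
  fun s => ⟨min (α s) (N + 2), by omega⟩

lemma toFinF_coe {N m : ℕ} {α : Fin (m + 1) → ℕ} (hb : ∀ s, α s ≤ N + 2) :
    (fun s => ((toFinF N m α s : ℕ))) = α := by
  funext s
  show min (α s) (N + 2) = α s
  exact min_eq_left (hb s)

lemma G_nu (N : ℕ) (lam : ℂ) (q qnu : ℕ → ℂ)
    (hqnu : ∀ n : ℕ, 1 ≤ n → n ≤ N + 1 → qnu n = if n = N + 1 then q 1 else q (n + 1))
    (j : ℕ) (hodd : Odd ((N : ℤ) - j)) :
    Gpoly j (N + 1) lam qnu = Gpoly j (N + 1) lam q := by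
  classical
  rcases Nat.eq_zero_or_pos j with rfl | hj
  · simp [Gpoly]
  obtain ⟨m, rfl⟩ : ∃ m, j = m + 1 := ⟨j - 1, by omega⟩
  rw [Gpoly, Gpoly, if_neg (by omega), if_neg (by omega)]
  rw [← Finset.sum_filter, ← Finset.sum_filter]
  refine Finset.sum_nbij' (fun β => toFinF N m (nuMap N m (fun t => (β t : ℕ))))
    (fun γ => toFinF N m (nuInv N m (fun t => (γ t : ℕ)))) ?_ ?_ ?_ ?_ ?_
  · intro β hβ
    rw [Finset.mem_filter] at hβ ⊢
    refine ⟨Finset.mem_univ _, ?_⟩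
    have hD2 := isD_nuMap hodd hβ.2
    have hb : ∀ s, nuMap N m (fun t => ((β t : ℕ))) s ≤ N + 2 := by
      intro s; have := (hD2.2.1 s).2; omega
    rw [toFinF_coe hb]
    exact hD2
  · intro γ hγ
    rw [Finset.mem_filter] at hγ ⊢
    refine ⟨Finset.mem_univ _, ?_⟩
    have hD2 := isD_nuInv hodd hγ.2
    have hb : ∀ s, nuInv N m (fun t => ((γ t : ℕ))) s ≤ N + 2 := by
      intro s; have := (hD2.2.1 s).2; omega
    rw [toFinF_coe hb]
    exact hD2
  · intro β hβ
    have hD := (Finset.mem_filter.mp hβ).2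
    have hD2 := isD_nuMap hodd hD
    have hb : ∀ s, nuMap N m (fun t => ((β t : ℕ))) s ≤ N + 2 := by
      intro s; have := (hD2.2.1 s).2; omega
    show toFinF N m (nuInv N m (fun t =>
      ((toFinF N m (nuMap N m (fun t => ((β t : ℕ)))) t : ℕ)))) = β
    rw [toFinF_coe hb, nuInv_nuMap hD]
    funext s
    apply Fin.ext
    show min ((β s : ℕ)) (N + 2) = (β s : ℕ)
    exact min_eq_left (by have := (β s).isLt; omega)
  · intro γ hγ
    have hD := (Finset.mem_filter.mp hγ).2
    have hD2 := isD_nuInv hodd hD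
    have hb : ∀ s, nuInv N m (fun t => ((γ t : ℕ))) s ≤ N + 2 := by
      intro s; have := (hD2.2.1 s).2; omega
    show toFinF N m (nuMap N m (fun t =>
      ((toFinF N m (nuInv N m (fun t => ((γ t : ℕ)))) t : ℕ)))) = γ
    rw [toFinF_coe hb, nuMap_nuInv hD]
    funext s
    apply Fin.ext
    show min ((γ s : ℕ)) (N + 2) = (γ s : ℕ)
    exact min_eq_left (by have := (γ s).isLt; omega)
  · intro β hβ
    have hD := (Finset.mem_filter.mp hβ).2
    have hD2 := isD_nuMap hodd hD
    show (∏ s, (lam - qnu ((β s : ℕ)))) =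
      ∏ s, (lam - q ((toFinF N m (nuMap N m (fun t => ((β t : ℕ)))) s : ℕ)))
    have hrw : ∀ s, ((toFinF N m (nuMap N m (fun t => ((β t : ℕ)))) s : ℕ)) =
        nuMap N m (fun t => ((β t : ℕ))) s := by
      intro s
      show min _ _ = _
      exact min_eq_left (by have := (hD2.2.1 s).2; omega)
    have hrw2 : (∏ s, (lam - q ((toFinF N m (nuMap N m (fun t => ((β t : ℕ)))) s : ℕ)))) =
        ∏ s, (lam - q (nuMap N m (fun t => ((β t : ℕ))) s)) :=
      Finset.prod_congr rfl fun s _ => by rw [hrw s]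
    rw [hrw2]
    by_cases hlast : ((β ⟨m, Nat.lt_succ_self m⟩ : ℕ)) = N + 1
    · rw [Fin.prod_univ_succ (f := fun s => lam - q (nuMap N m (fun t => ((β t : ℕ))) s)),
          Fin.prod_univ_castSucc (f := fun s => lam - qnu ((β s : ℕ)))]
      have h0 : nuMap N m (fun t => ((β t : ℕ))) (0 : Fin (m + 1)) = 1 :=
        nuMap_apply_zero hlast 0 rfl
      have hlastq : qnu ((β (Fin.last m) : ℕ)) = q 1 := by
        have e : ((β (Fin.last m) : ℕ)) = N + 1 := hlast
        rw [e, hqnu (N + 1) (by omega) le_rfl, if_pos rfl]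
      have hmid : ∀ s : Fin m, qnu ((β s.castSucc : ℕ)) =
          q (nuMap N m (fun t => ((β t : ℕ))) s.succ) := by
        intro s
        rw [nuMap_apply_pos hlast s.succ (by simp) s.castSucc (by simp)]
        have hlt : ((β s.castSucc : ℕ)) < ((β ⟨m, Nat.lt_succ_self m⟩ : ℕ)) :=
          hD.1 (by rw [Fin.lt_def]; simpa using s.isLt)
        have hb1 : 1 ≤ ((β s.castSucc : ℕ)) := (hD.2.1 s.castSucc).1
        rw [hqnu ((β s.castSucc : ℕ)) hb1 (by omega), if_neg (by omega)]
      have e1 : (lam - qnu ((β (Fin.last m) : ℕ))) =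
          (lam - q (nuMap N m (fun t => ((β t : ℕ))) 0)) := by rw [h0, hlastq]
      have e2 : (∏ s : Fin m, (lam - qnu ((β s.castSucc : ℕ)))) =
          ∏ s : Fin m, (lam - q (nuMap N m (fun t => ((β t : ℕ))) s.succ)) :=
        Finset.prod_congr rfl fun s _ => by rw [hmid s]
      rw [e1, e2, mul_comm]
    · refine Finset.prod_congr rfl fun s _ => ?_
      rw [nuMap_apply_nolast hlast s]
      have hb1 : 1 ≤ ((β s : ℕ)) := (hD.2.1 s).1
      have hne : ((β s : ℕ)) ≤ N := by
        have hle : ((β s : ℕ)) ≤ ((β ⟨m, Nat.lt_succ_self m⟩ : ℕ)) :=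
          isD_mono_le hD (by simpa using Nat.lt_succ_iff.mp s.isLt)
        have h9 : ((β ⟨m, Nat.lt_succ_self m⟩ : ℕ)) ≤ N + 1 :=
          (hD.2.1 ⟨m, Nat.lt_succ_self m⟩).2
        omega
      rw [hqnu ((β s : ℕ)) hb1 (by omega), if_neg (by omega)]

end CombinatorialAux

/-- `Δ` is invariant under the cyclic shift `M_ν` and the reversal `M_τ` of the
potential; equivalently, for each `j` with `N - j` odd, `G_j^{N+1}` is invariant
under both operations. -/
theorem Delta_shift_reversal_invariant (N : ℕ) (lam : ℂ) (q qnu qtau : ℕ → ℂ)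
    (hqnu : ∀ n : ℕ, 1 ≤ n → n ≤ N + 1 →
      qnu n = if n = N + 1 then q 1 else q (n + 1))
    (hqtau : ∀ n : ℕ, 1 ≤ n → n ≤ N + 1 → qtau n = q (N + 2 - n)) :
    Delta N lam qnu = Delta N lam q ∧ Delta N lam qtau = Delta N lam q ∧
    (∀ j : ℕ, Odd ((N : ℤ) - j) →
      Gpoly j (N + 1) lam qnu = Gpoly j (N + 1) lam q ∧
      Gpoly j (N + 1) lam qtau = Gpoly j (N + 1) lam q) := by
  exact ⟨Delta_nu N lam q qnu hqnu, Delta_tau N lam q qtau hqtau,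
    fun j hodd => ⟨G_nu N lam q qnu hqnu j hodd, G_tau N lam q qtau hqtau j⟩⟩
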